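/- arXiv:1501.07564 — 5 statements merged into one kernel-verified Lean document; each statement's English description precedes it below -/
import Mathlib

section
/- Let A be an n×n complex matrix all of whose eigenvalues have strictly negative real part, and let D be any n×n complex matrix. Then the function t ↦ e^{tA} D e^{tA^H} is Bochner integrable on [0,∞), and the matrix X = ∫₀^∞ e^{tA} D e^{tA^H} dt satisfies A X + X A^H = −D. -/
open Matrix MeasureTheory NormedSpace

attribute [local instance] Matrix.frobeniusNormedAddCommGroup Matrix.frobeniusNormedSpace

/-! On the generalized eigenspace of `A` for `μ`, `e^{tA}` acts as `e^{tμ}` times a polynomial in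
`t`; since these eigenspaces span `ℂⁿ` and every `Re μ` is negative, `e^{tA} = O(e^{-εt})` for some
`ε > 0`, and so is `e^{tAᴴ} = (e^{tA})ᴴ`. Hence `f t = e^{tA} D e^{tAᴴ}` is integrable on `[0, ∞)`
and tends to `0`, and as `f' = A f + f Aᴴ`, integrating `f'` over `[0, ∞)` gives
`A X + X Aᴴ = lim f - f 0 = -D`. -/

open Asymptotics Filter Finset Nat Topology Set

theorem Real.isBigO_pow_mul_exp_mul_of_lt {a b : ℝ} (hab : a < b) (j : ℕ) :
    (fun t : ℝ => t ^ j * Real.exp (a * t)) =O[atTop] fun t => Real.exp (b * t) := by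
  have h := (isLittleO_pow_exp_pos_mul_atTop j (sub_pos.2 hab)).isBigO.mul
    (isBigO_refl (fun t => Real.exp (a * t)) atTop)
  refine h.congr_right fun t => ?_
  rw [← Real.exp_add]; ring_nf

theorem integrableOn_Ici_of_isBigO_exp_neg {E : Type*} [NormedAddCommGroup E] {f : ℝ → E}
    {a b : ℝ} (hb : 0 < b) (hf : ContinuousOn f (Ici a))
    (ho : f =O[atTop] fun t => Real.exp (-b * t)) : IntegrableOn f (Ici a) :=
  (hf.locallyIntegrableOn measurableSet_Ici).integrableOn_of_isBigO_atTop ho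
    ⟨Ioi b, Ioi_mem_atTop b, exp_neg_integrableOn_Ioi b hb⟩

section BanachAlgebra

variable {𝔸 : Type*} [NormedRing 𝔸] [NormedAlgebra ℝ 𝔸] [CompleteSpace 𝔸]

theorem hasDerivAt_exp_smul_mul_mul_exp_smul (a b d : 𝔸) (t : ℝ) :
    HasDerivAt (fun t : ℝ => exp (t • a) * d * exp (t • b))
      (a * (exp (t • a) * d * exp (t • b)) + exp (t • a) * d * exp (t • b) * b) t := by
  refine (((hasDerivAt_exp_smul_const' a t).mul_const d).mul
    (hasDerivAt_exp_smul_const b t)).congr_deriv ?_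
  simp only [mul_assoc]

theorem integrableOn_and_sylvester_of_isBigO_exp_neg {a b d : 𝔸} {ε : ℝ} (hε : 0 < ε)
    (hdecay : (fun t : ℝ => exp (t • a) * d * exp (t • b)) =O[atTop]
      fun t => Real.exp (-ε * t)) :
    IntegrableOn (fun t : ℝ => exp (t • a) * d * exp (t • b)) (Ici 0) ∧
      a * (∫ t in Ici (0 : ℝ), exp (t • a) * d * exp (t • b)) +
        (∫ t in Ici (0 : ℝ), exp (t • a) * d * exp (t • b)) * b = -d := by
  set f := fun t : ℝ => exp (t • a) * d * exp (t • b)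
  have hderiv := hasDerivAt_exp_smul_mul_mul_exp_smul a b d
  have hint : IntegrableOn f (Ici 0) := integrableOn_Ici_of_isBigO_exp_neg hε
    (fun t _ => (hderiv t).continuousAt.continuousWithinAt) hdecay
  have hint' : IntegrableOn f (Ioi 0) := hint.mono_set Ioi_subset_Ici_self
  have hlim : Tendsto f atTop (𝓝 0) := hdecay.trans_tendsto <|
    Real.tendsto_exp_atBot.comp (tendsto_id.const_mul_atTop_of_neg (neg_neg_of_pos hε))
  have hFTC := integral_Ioi_of_hasDerivAt_of_tendsto' (fun t _ => hderiv t)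
    ((hint'.const_mul a).add (hint'.mul_const b)) hlim
  rw [integral_add (hint'.const_mul a) (hint'.mul_const b), integral_const_mul_of_integrable hint',
    integral_mul_const_of_integrable hint'] at hFTC
  refine ⟨hint, ?_⟩
  simpa [f, integral_Ici_eq_integral_Ioi] using hFTC

end BanachAlgebra

section MatrixExp

attribute [local instance] Matrix.frobeniusNormedRing Matrix.frobeniusNormedAlgebra

variable {ι : Type*} [Fintype ι] [DecidableEq ι]

theorem Matrix.exp_smul_mulVec_eq_sum_of_pow_mulVec_eq_zero (A : Matrix ι ι ℂ) (μ : ℂ) {k : ℕ}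
    {v : ι → ℂ} (hv : (A - μ • 1) ^ k *ᵥ v = 0) (t : ℝ) :
    exp (t • A) *ᵥ v =
      Complex.exp (t * μ) • ∑ j ∈ range k, (t ^ j / j ! : ℝ) • ((A - μ • 1) ^ j *ᵥ v) := by
  set N := A - μ • 1
  have hsplit : t • A = algebraMap ℂ _ (t * μ) + t • N := by
    rw [smul_sub, Algebra.algebraMap_eq_smul_one, ← smul_assoc, Complex.real_smul, add_sub_cancel]
  have hexpN : exp (t • N) *ᵥ v = ∑ j ∈ range k, (t ^ j / j ! : ℝ) • (N ^ j *ᵥ v) := by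
    let L : Matrix ι ι ℂ →L[ℝ] (ι → ℂ) :=
      (((mulVecBilin ℂ ℂ).flip v).restrictScalars ℝ).toContinuousLinearMap
    have hterm : ∀ j, L ((j ! : ℝ)⁻¹ • (t • N) ^ j) = (t ^ j / j ! : ℝ) • (N ^ j *ᵥ v) := by
      intro j
      simp [L, smul_pow, smul_smul, div_eq_inv_mul]
    have hzero : ∀ j ∉ range k, L ((j ! : ℝ)⁻¹ • (t • N) ^ j) = 0 := by
      intro j hj
      have hNj : N ^ j *ᵥ v = 0 := by
        rw [← Nat.sub_add_cancel (not_lt.1 (mem_range.not.1 hj)), pow_add, ← mulVec_mulVec, hv,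
          mulVec_zero]
      rw [hterm, hNj, smul_zero]
    rw [exp_eq_tsum ℝ]
    change L _ = _
    rw [L.map_tsum (expSeries_summable' _), tsum_eq_sum hzero]
    exact sum_congr rfl fun j _ => hterm j
  have hexpμ : exp (algebraMap ℂ (Matrix ι ι ℂ) (t * μ)) = Complex.exp (t * μ) • 1 :=
    (algebraMap_exp_comm _).symm.trans <| by
      rw [Algebra.algebraMap_eq_smul_one, Complex.exp_eq_exp_ℂ]
  rw [hsplit, Matrix.exp_add_of_commute _ _ (Algebra.commute_algebraMap_left _ _),
    ← mulVec_mulVec, hexpN, hexpμ, smul_mulVec, one_mulVec]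

theorem Matrix.isBigO_exp_smul_mulVec_of_mem_maxGenEigenspace {A : Matrix ι ι ℂ} {μ : ℂ}
    {ε : ℝ} (hμ : μ.re < -ε) {v : ι → ℂ} (hv : v ∈ Module.End.maxGenEigenspace (toLin' A) μ) :
    (fun t : ℝ => exp (t • A) *ᵥ v) =O[atTop] fun t => Real.exp (-ε * t) := by
  obtain ⟨k, hk⟩ := (Module.End.mem_maxGenEigenspace _ _ _).1 hv
  have hkv : (A - μ • 1) ^ k *ᵥ v = 0 := by
    rwa [← toLin'_apply, toLin'_pow, map_sub, map_smul, toLin'_one, ← Module.End.one_eq_id]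
  simp_rw [exp_smul_mulVec_eq_sum_of_pow_mulVec_eq_zero A μ hkv, Finset.smul_sum]
  refine IsBigO.fun_sum fun j _ => ?_
  refine (isBigO_of_le' (c := ‖(A - μ • 1) ^ j *ᵥ v‖ / j !) atTop fun t => le_of_eq ?_).trans
    (Real.isBigO_pow_mul_exp_mul_of_lt hμ j)
  simp only [norm_smul, Complex.norm_exp, Complex.mul_re, Complex.ofReal_re, Complex.ofReal_im,
    zero_mul, sub_zero, norm_div, norm_pow, Real.norm_eq_abs, RCLike.norm_natCast, norm_mul,
    Real.abs_exp]
  rw [mul_comm t]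
  ring

theorem Matrix.isBigO_exp_smul_mulVec {A : Matrix ι ι ℂ} {ε : ℝ}
    (hA : ∀ μ ∈ spectrum ℂ A, μ.re < -ε) (v : ι → ℂ) :
    (fun t : ℝ => exp (t • A) *ᵥ v) =O[atTop] fun t => Real.exp (-ε * t) := by
  have hv : v ∈ ⨆ μ, Module.End.maxGenEigenspace (toLin' A) μ := by
    rw [Module.End.iSup_maxGenEigenspace_eq_top]; trivial
  refine Submodule.iSup_induction
    (motive := fun w => (fun t : ℝ => exp (t • A) *ᵥ w) =O[atTop] _) _ hv (fun μ w hw => ?_)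
    (by simp only [mulVec_zero]; exact isBigO_zero _ _) fun w₁ w₂ h₁ h₂ => ?_
  · rcases eq_or_ne w 0 with rfl | hw0
    · simp only [mulVec_zero]; exact isBigO_zero _ _
    have hμ : Module.End.HasEigenvalue (toLin' A) μ :=
      (Module.End.hasUnifEigenvalue_iff_hasUnifEigenvalue_one (by simp)).1
        ((Submodule.ne_bot_iff _).2 ⟨w, hw, hw0⟩)
    refine isBigO_exp_smul_mulVec_of_mem_maxGenEigenspace (hA μ ?_) hw
    simpa using hμ.mem_spectrum
  · simpa [mulVec_add] using h₁.add h₂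

theorem Matrix.exists_isBigO_exp_smul {A : Matrix ι ι ℂ} (hA : ∀ μ ∈ spectrum ℂ A, μ.re < 0) :
    ∃ ε > 0, (fun t : ℝ => exp (t • A)) =O[atTop] fun t => Real.exp (-ε * t) := by
  obtain ⟨ε, hε, hεA⟩ : ∃ ε > 0, ∀ μ ∈ spectrum ℂ A, μ.re < -ε := by
    have : ∀ᶠ ε in 𝓝[>] (0 : ℝ), ∀ μ ∈ spectrum ℂ A, μ.re < -ε :=
      (eventually_all_finite A.finite_spectrum).2 fun μ hμ =>
        (tendsto_id.neg.mono_left nhdsWithin_le_nhds).eventually_const_lt (by simpa using hA μ hμ)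
    exact (this.and self_mem_nhdsWithin).exists.imp fun ε h => ⟨h.2, h.1⟩
  refine ⟨ε, hε, ?_⟩
  let L : (ι → ι → ℂ) →L[ℂ] Matrix ι ι ℂ := (ofLinearEquiv ℂ).toLinearMap.toContinuousLinearMap
  refine (L.isBigO_comp (fun t i j => exp (t • A) i j) atTop).trans
    (isBigO_pi.2 fun i => isBigO_pi.2 fun j => ?_)
  simpa [mulVec_single_one] using isBigO_pi.1 (isBigO_exp_smul_mulVec hεA (Pi.single j 1)) i

end MatrixExp

/-- **Heinz integral-of-exponentials closed form.**
If all eigenvalues of `A` have strictly negative real part, then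
`t ↦ e^{tA} D e^{tAᴴ}` is Bochner integrable on `[0, ∞)` and
`X = ∫₀^∞ e^{tA} D e^{tAᴴ} dt` satisfies `A X + X Aᴴ = -D`. -/
theorem lyapunov_exp_integral_closed_form
    (n : ℕ) (A D : Matrix (Fin n) (Fin n) ℂ)
    (hA : ∀ μ ∈ spectrum ℂ A, μ.re < 0) :
    @IntegrableOn ℝ (Matrix (Fin n) (Fin n) ℂ) _
      (Matrix.frobeniusNormedAddCommGroup (n := Fin n) (m := Fin n) (α := ℂ)).toUniformSpace.toTopologicalSpace _
      (fun t : ℝ => exp (t • A) * D * exp (t • Aᴴ)) (Set.Ici (0 : ℝ)) volume ∧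
    A * (∫ t in Set.Ici (0 : ℝ), exp (t • A) * D * exp (t • Aᴴ)) +
      (∫ t in Set.Ici (0 : ℝ), exp (t • A) * D * exp (t • Aᴴ)) * Aᴴ = -D := by
  let _ : NormedRing (Matrix (Fin n) (Fin n) ℂ) := Matrix.frobeniusNormedRing
  let _ : NormedAlgebra ℝ (Matrix (Fin n) (Fin n) ℂ) := Matrix.frobeniusNormedAlgebra
  obtain ⟨ε, hε, hdecayA⟩ := exists_isBigO_exp_smul hA
  have hdecayAH : (fun t : ℝ => exp (t • Aᴴ)) =O[atTop] fun t => Real.exp (-ε * t) := by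
    refine isBigO_norm_left.1 ((isBigO_norm_left.2 hdecayA).congr_left fun t => ?_)
    rw [← frobenius_norm_conjTranspose, ← exp_conjTranspose, conjTranspose_smul, star_trivial]
  have hdecay := (hdecayA.mul (isBigO_const_one ℝ D atTop)).mul hdecayAH
  refine integrableOn_and_sylvester_of_isBigO_exp_neg (ε := 2 * ε) (by positivity)
    (hdecay.congr_right fun t => ?_)
  rw [mul_one, ← Real.exp_add]; ring_nf
end

section
/- Let A be an n×n real symmetric positive definite matrix with bandwidth β ≥ 1, i.e., A_{ij} = 0 whenever |i − j| > β. Let λ_min and λ_max denote its smallest and largest eigenvalues, let κ = λ_max/λ_min, q = (√κ − 1)/(√κ + 1), and c₀ = max{ 1/λ_min , (1 + √κ)²/(2 λ_max) }. Then for all indices i, j, the entries of the inverse satisfy |(A^{-1})_{ij}| ≤ c₀ · q^{|i−j|/β}. -/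
/-!
Let `a ≤ b` be the extreme eigenvalues of `A` and `q = (√(b/a) - 1)/(√(b/a) + 1)`. The affine map
`x ↦ t` from `[a, b]` onto `[-1, 1]` turns `1/x` into a multiple of `(1 - q²)² / (1 + q² + 2qt)`,
whose Chebyshev expansion is geometric with ratio `-q`. A corrected truncation at degree `k` has
error `2 (-q)^(k+1) (T_{k+1} + 2q T_k + q² T_{k-1})(t) / (1 + q² + 2qt)`. Its numerator is in
absolute value at most the denominator: at `t = cos θ` it is the real part of
`e^{ikθ} (e^{iθ/2} + q e^{-iθ/2})²`, whose modulus is `1 + q² + 2qt`.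
This gives a polynomial `p` of degree `k` with `|1/x - p x| ≤ C q^(k+1)` on `[a, b]`. By the
spectral theorem the entries of `A⁻¹ - p(A)` obey the same bound, while `p(A)` has bandwidth `kβ`
and so vanishes at `(i, j)` once `kβ < |i - j|`.
-/

open Polynomial Polynomial.Chebyshev Real Set

lemma abs_cos_add_add_cos_sub_le (q θ φ : ℝ) :
    |cos (φ + θ) + 2 * q * cos φ + q ^ 2 * cos (φ - θ)| ≤ 1 + q ^ 2 + 2 * q * cos θ := by
  have hsq : (cos (φ + θ) + 2 * q * cos φ + q ^ 2 * cos (φ - θ)) ^ 2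
      + (((1 + q ^ 2) * cos θ + 2 * q) * sin φ + (1 - q ^ 2) * sin θ * cos φ) ^ 2
      = (1 + q ^ 2 + 2 * q * cos θ) ^ 2 := by
    rw [cos_add, cos_sub]
    linear_combination (((1 + q ^ 2) * cos θ + 2 * q) ^ 2 + ((1 - q ^ 2) * sin θ) ^ 2)
      * sin_sq_add_cos_sq φ + (1 - q ^ 2) ^ 2 * sin_sq_add_cos_sq θ
  refine abs_le_of_sq_le_sq (by nlinarith) ?_
  nlinarith [sq_nonneg (q + cos θ), cos_sq_le_one θ]

noncomputable def chebyshevRemainder (q : ℝ) (k : ℤ) : ℝ[X] :=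
  T ℝ (k + 1) + 2 * C q * T ℝ k + C q ^ 2 * T ℝ (k - 1)

lemma abs_eval_chebyshevRemainder_le (q : ℝ) (k : ℤ) {t : ℝ} (ht : t ∈ Icc (-1) 1) :
    |(chebyshevRemainder q k).eval t| ≤ 1 + q ^ 2 + 2 * q * t := by
  obtain ⟨θ, rfl⟩ : ∃ θ, cos θ = t := ⟨arccos t, cos_arccos ht.1 ht.2⟩
  simp only [chebyshevRemainder, eval_add, eval_mul, eval_pow, eval_C, eval_ofNat, T_real_cos]
  convert abs_cos_add_add_cos_sub_le q θ (k * θ) using 4 <;> push_cast <;> ring_nf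

lemma mul_T_add_mul_T_eq_chebyshevRemainder_add (q : ℝ) (k : ℤ) :
    (1 + C q ^ 2 + 2 * C q * X) * (T ℝ (k + 1) + C q * T ℝ k)
      = chebyshevRemainder q k + C q * chebyshevRemainder q (k + 1) := by
  simp only [chebyshevRemainder, add_sub_cancel_right, add_assoc, one_add_one_eq_two]
  linear_combination -C q * T_add_two ℝ k - C q ^ 2 * T_sub_one ℝ k

lemma exists_natDegree_le_mul_eq_sub_chebyshevRemainder (q : ℝ) (k : ℕ) :
    ∃ P : ℝ[X], P.natDegree ≤ k ∧ (1 + C q ^ 2 + 2 * C q * X) * P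
      = (1 - C q ^ 2) ^ 2 - 2 * (-C q) ^ (k + 1) * chebyshevRemainder q k := by
  induction k with
  | zero =>
    refine ⟨1 + C q ^ 2, by compute_degree!, ?_⟩
    simp only [chebyshevRemainder, CharP.cast_eq_zero, zero_add, zero_sub, T_zero, T_one,
      T_neg_one]
    ring
  | succ k ih =>
    obtain ⟨P, hdeg, hP⟩ := ih
    refine ⟨P + C (2 * (-q) ^ (k + 1)) * (T ℝ (k + 1) + C q * T ℝ k), ?_, ?_⟩
    · refine natDegree_add_le_of_degree_le (hdeg.trans k.le_succ) ((natDegree_C_mul_le _ _).trans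
        (natDegree_add_le_of_degree_le (by simp [natDegree_T]; omega) ((natDegree_C_mul_le _ _).trans
          (by simp [natDegree_T]))))
    · rw [mul_add, hP, mul_left_comm, mul_T_add_mul_T_eq_chebyshevRemainder_add]
      simp only [map_mul, map_pow, map_neg, map_ofNat]
      push_cast
      ring

lemma exists_natDegree_le_abs_div_sub_eval_le {q : ℝ} (hq : |q| < 1) (k : ℕ) :
    ∃ P : ℝ[X], P.natDegree ≤ k ∧ ∀ t ∈ Icc (-1 : ℝ) 1,
      |(1 - q ^ 2) ^ 2 / (1 + q ^ 2 + 2 * q * t) - P.eval t| ≤ 2 * |q| ^ (k + 1) := by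
  obtain ⟨P, hdeg, hP⟩ := exists_natDegree_le_mul_eq_sub_chebyshevRemainder q k
  refine ⟨P, hdeg, fun t ht => ?_⟩
  have hD : 0 < 1 + q ^ 2 + 2 * q * t := by
    have : |q * t| ≤ |q| := by
      rw [abs_mul]; exact mul_le_of_le_one_right (abs_nonneg q) (abs_le.2 ht)
    nlinarith [neg_abs_le (q * t), sq_abs q]
  have hPt := congrArg (eval t) hP
  simp only [eval_mul, eval_add, eval_sub, eval_pow, eval_neg, eval_one, eval_C, eval_X,
    eval_ofNat] at hPt
  have herr : (1 - q ^ 2) ^ 2 / (1 + q ^ 2 + 2 * q * t) - P.eval t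
      = 2 * (-q) ^ (k + 1) * ((chebyshevRemainder q k).eval t / (1 + q ^ 2 + 2 * q * t)) := by
    rw [eq_div_of_mul_eq hD.ne' ((mul_comm _ _).trans hPt)]
    ring
  rw [herr, abs_mul, abs_mul, abs_pow, abs_neg, abs_two]
  refine mul_le_of_le_one_right (by positivity) ?_
  rw [abs_div, abs_of_pos hD, div_le_one hD]
  exact abs_eval_chebyshevRemainder_le q k ht

lemma exists_natDegree_le_abs_inv_sub_eval_le {a b : ℝ} (ha : 0 < a) (hab : a ≤ b) (k : ℕ) :
    ∃ p : ℝ[X], p.natDegree ≤ k ∧ ∀ x ∈ Icc a b, |x⁻¹ - p.eval x|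
      ≤ (1 + √(b / a)) ^ 2 / (2 * b) * ((√(b / a) - 1) / (√(b / a) + 1)) ^ (k + 1) := by
  set σ := √(b / a)
  set q := (σ - 1) / (σ + 1) with hq
  have hσ1 : 1 ≤ σ := one_le_sqrt.2 ((one_le_div ha).2 hab)
  have hb : b = σ ^ 2 * a := by
    rw [sq_sqrt (div_nonneg (ha.le.trans hab) ha.le), div_mul_cancel₀ _ ha.ne']
  have hq0 : 0 ≤ q := div_nonneg (by linarith) (by linarith)
  have hq1 : |q| < 1 := by rw [abs_of_nonneg hq0, div_lt_one (by linarith)]; linarith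
  obtain ⟨P, hdeg, hP⟩ := exists_natDegree_le_abs_div_sub_eval_le hq1 k
  -- `t` maps `[a, b]` affinely onto `[-1, 1]` (and is `0` when `a = b`)
  let t (x : ℝ) := (2 * x - a - b) / (b - a)
  refine ⟨C ((1 + σ) ^ 2 / (4 * b)) * P.comp (C (2 / (b - a)) * X - C ((a + b) / (b - a))),
    (natDegree_C_mul_le _ _).trans (natDegree_comp_le.trans ?_), fun x hx => ?_⟩
  · simpa using Nat.mul_le_mul hdeg (show _ ≤ 1 by compute_degree)
  have ht : t x ∈ Icc (-1) 1 ∧ (b - a) * t x = 2 * x - a - b := by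
    rcases hab.eq_or_lt with rfl | hlt
    · obtain rfl : x = a := le_antisymm hx.2 hx.1
      simp only [t, sub_self, div_zero, mem_Icc]
      exact ⟨by norm_num, by ring⟩
    · have hba : 0 < b - a := sub_pos.2 hlt
      refine ⟨⟨?_, ?_⟩, mul_div_cancel₀ _ hba.ne'⟩
      · rw [le_div_iff₀ hba]; linarith [hx.1]
      · rw [div_le_one hba]; linarith [hx.2]
  have hu : 1 + q ^ 2 + 2 * q * t x = 4 * x / (a * (1 + σ) ^ 2) := by
    rw [eq_div_iff (by positivity), hq]
    field_simp
    rw [hb] at ht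
    linear_combination 2 * (1 + σ) ^ 2 * ht.2
  have hinv : x⁻¹ = (1 + σ) ^ 2 / (4 * b) * ((1 - q ^ 2) ^ 2 / (1 + q ^ 2 + 2 * q * t x)) := by
    have h1q : 1 - q ^ 2 = 4 * σ / (1 + σ) ^ 2 := by
      rw [hq]; field_simp; ring
    have hx0 : 0 < x := ha.trans_le hx.1
    rw [hu, h1q, hb]
    field_simp
  have hcomp : (C (2 / (b - a)) * X - C ((a + b) / (b - a))).eval x = t x := by
    simp only [eval_sub, eval_mul, eval_C, eval_X, t]
    ring
  have hbpos : 0 < (1 + σ) ^ 2 / (4 * b) := by have := ha.trans_le hab; positivity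
  calc |x⁻¹ - (C ((1 + σ) ^ 2 / (4 * b)) * P.comp (C (2 / (b - a)) * X
        - C ((a + b) / (b - a)))).eval x|
      = (1 + σ) ^ 2 / (4 * b) * |(1 - q ^ 2) ^ 2 / (1 + q ^ 2 + 2 * q * t x) - P.eval (t x)| := by
        rw [hinv, eval_mul, eval_C, eval_comp, hcomp, ← mul_sub, abs_mul, abs_of_pos hbpos]
    _ ≤ (1 + σ) ^ 2 / (4 * b) * (2 * |q| ^ (k + 1)) := by gcongr; exact hP _ ht.1
    _ = (1 + σ) ^ 2 / (2 * b) * q ^ (k + 1) := by rw [abs_of_nonneg hq0]; ring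

namespace Matrix

open Finset

section Banded

variable {R : Type*} {n : ℕ}

def IsBanded [Zero R] (A : Matrix (Fin n) (Fin n) R) (β : ℕ) : Prop :=
  ∀ i j : Fin n, (β : ℤ) < |(i : ℤ) - (j : ℤ)| → A i j = 0

lemma IsBanded.mono [Zero R] {A : Matrix (Fin n) (Fin n) R} {β γ : ℕ} (hA : A.IsBanded β)
    (hβγ : β ≤ γ) : A.IsBanded γ :=
  fun i j h => hA i j (lt_of_le_of_lt (by exact_mod_cast hβγ) h)

variable [Semiring R]

lemma isBanded_one : (1 : Matrix (Fin n) (Fin n) R).IsBanded 0 := fun i j h =>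
  one_apply_ne fun hij => by simp [hij] at h

lemma IsBanded.mul {A B : Matrix (Fin n) (Fin n) R} {β γ : ℕ} (hA : A.IsBanded β)
    (hB : B.IsBanded γ) : (A * B).IsBanded (β + γ) := by
  intro i j hij
  rw [mul_apply]
  refine sum_eq_zero fun l _ => ?_
  by_cases hil : (β : ℤ) < |(i : ℤ) - (l : ℤ)|
  · rw [hA i l hil, zero_mul]
  · have hlj : (γ : ℤ) < |(l : ℤ) - (j : ℤ)| := by
      have := abs_sub_le (i : ℤ) l j
      push_cast at hij
      linarith
    rw [hB l j hlj, mul_zero]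

lemma IsBanded.pow {A : Matrix (Fin n) (Fin n) R} {β : ℕ} (hA : A.IsBanded β) (m : ℕ) :
    (A ^ m).IsBanded (m * β) := by
  induction m with
  | zero => simpa using isBanded_one
  | succ m ih => simpa [pow_succ, Nat.succ_mul] using ih.mul hA

end Banded

lemma IsBanded.aeval {R : Type*} [CommSemiring R] {n : ℕ} {A : Matrix (Fin n) (Fin n) R} {β : ℕ}
    (hA : A.IsBanded β) {p : R[X]} {k : ℕ} (hp : p.natDegree ≤ k) :
    (aeval A p).IsBanded (k * β) := by
  intro i j hij
  rw [aeval_eq_sum_range, sum_apply]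
  refine sum_eq_zero fun m hm => ?_
  have hmk : m ≤ k := (Nat.lt_succ_iff.1 (mem_range.1 hm)).trans hp
  rw [smul_apply, (hA.pow m).mono (Nat.mul_le_mul_right β hmk) i j hij, smul_zero]

variable {n 𝕜 : Type*} [Fintype n] [DecidableEq n] [RCLike 𝕜]

lemma norm_mul_diagonal_mul_star_apply_le {U : Matrix n n 𝕜} (hU : U ∈ unitaryGroup n 𝕜)
    {w : n → 𝕜} {K : ℝ} (hw : ∀ m, ‖w m‖ ≤ K) (i j : n) :
    ‖(U * diagonal w * star U) i j‖ ≤ K := by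
  have hrow (i : n) : ∑ m, ‖U i m‖ ^ 2 = 1 := by
    have h : (U * star U) i i = 1 := by rw [Unitary.mul_star_self_of_mem hU, one_apply_eq]
    simp only [mul_apply, star_apply, ← starRingEnd_apply, RCLike.mul_conj] at h
    exact_mod_cast h
  calc ‖(U * diagonal w * star U) i j‖ = ‖∑ m, U i m * w m * star (U j m)‖ := by
        rw [mul_apply]
        simp only [mul_diagonal, star_apply]
    _ ≤ ∑ m, (‖U i m‖ ^ 2 + ‖U j m‖ ^ 2) / 2 * K := by
        refine (norm_sum_le _ _).trans (sum_le_sum fun m _ => ?_)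
        rw [norm_mul, norm_mul, norm_star, mul_right_comm]
        gcongr
        · nlinarith [sq_nonneg (‖U i m‖ - ‖U j m‖)]
        · exact hw m
    _ = K := by rw [← sum_mul, ← sum_div, sum_add_distrib, hrow, hrow]; ring

lemma IsHermitian.norm_cfc_apply_le {A : Matrix n n 𝕜} (hA : A.IsHermitian) {f : ℝ → ℝ} {K : ℝ}
    (hf : ∀ m, |f (hA.eigenvalues m)| ≤ K) (i j : n) : ‖cfc f A i j‖ ≤ K := by
  rw [hA.cfc_eq, IsHermitian.cfc, Unitary.conjStarAlgAut_apply]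
  exact norm_mul_diagonal_mul_star_apply_le hA.eigenvectorUnitary.2 (by simpa using hf) i j

lemma IsHermitian.norm_inv_sub_aeval_apply_le {A : Matrix n n 𝕜} (hA : A.IsHermitian)
    (hunit : IsUnit A) (p : ℝ[X]) {K : ℝ}
    (hK : ∀ m, |(hA.eigenvalues m)⁻¹ - p.eval (hA.eigenvalues m)| ≤ K) (i j : n) :
    ‖(A⁻¹ - aeval A p) i j‖ ≤ K := by
  have hsa : IsSelfAdjoint A := hA
  have hcfc : A⁻¹ - aeval A p = cfc (fun x => x⁻¹ - p.eval x) A := by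
    rw [← cfc_polynomial p A, nonsing_inv_eq_ringInverse, ← cfc_ringInverse_id (R := ℝ) A hunit,
      ← cfc_sub _ _ A (A.finite_real_spectrum.continuousOn _)]
  rw [hcfc]
  exact hA.norm_cfc_apply_le hK i j

open scoped ComplexOrder in
lemma PosDef.pos_of_mem_spectrum {A : Matrix n n 𝕜} (hA : A.PosDef) {μ : ℝ}
    (hμ : μ ∈ spectrum ℝ A) : 0 < μ := by
  obtain ⟨m, rfl⟩ : μ ∈ Set.range hA.isHermitian.eigenvalues :=
    hA.isHermitian.spectrum_real_eq_range_eigenvalues ▸ hμ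
  exact hA.eigenvalues_pos m

end Matrix

lemma pow_pred_div_add_one_le_rpow {q : ℝ} (hq0 : 0 ≤ q) (hq1 : q ≤ 1) {d : ℕ} (hd : 0 < d)
    (β : ℕ) : q ^ ((d - 1) / β + 1) ≤ q ^ ((d : ℝ) / β) := by
  rw [← rpow_natCast]
  refine rpow_le_rpow_of_exponent_ge' hq0 hq1 (by positivity) ?_
  rcases β.eq_zero_or_pos with rfl | hβ
  · simp
  · rw [div_le_iff₀ (by exact_mod_cast hβ)]
    have hdβ : d ≤ ((d - 1) / β + 1) * β := by
      have := Nat.lt_div_mul_add (a := d - 1) hβ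
      rw [add_mul, one_mul]
      omega
    exact_mod_cast hdβ

theorem inv_banded_spd_decay_general
    (n : ℕ) (A : Matrix (Fin n) (Fin n) ℝ)
    (β : ℕ)
    (hpd : A.PosDef)
    (hband : ∀ i j : Fin n, (β : ℤ) < |(i : ℤ) - (j : ℤ)| → A i j = 0)
    (lammin lammax : ℝ)
    (hmin_mem : lammin ∈ spectrum ℝ A)
    (hmin : ∀ μ ∈ spectrum ℝ A, lammin ≤ μ) (hmax : ∀ μ ∈ spectrum ℝ A, μ ≤ lammax)
    (κ q c₀ : ℝ)
    (hκ : κ = lammax / lammin)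
    (hq : q = (Real.sqrt κ - 1) / (Real.sqrt κ + 1))
    (hc₀ : c₀ = max (1 / lammin) ((1 + Real.sqrt κ) ^ 2 / (2 * lammax))) :
    ∀ i j : Fin n,
      |A⁻¹ i j| ≤ c₀ * q ^ ((|(i : ℤ) - (j : ℤ)| : ℝ) / (β : ℝ)) := by
  intro i j
  have hA := hpd.isHermitian
  have hpos : 0 < lammin := hpd.pos_of_mem_spectrum hmin_mem
  have hle : lammin ≤ lammax := hmax _ hmin_mem
  have heig (m : Fin n) : hA.eigenvalues m ∈ Icc lammin lammax :=
    ⟨hmin _ (hA.eigenvalues_mem_spectrum_real m), hmax _ (hA.eigenvalues_mem_spectrum_real m)⟩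
  have hσ : 1 ≤ √κ := one_le_sqrt.2 (hκ ▸ (one_le_div hpos).2 hle)
  have hq0 : 0 ≤ q := hq ▸ div_nonneg (by linarith) (by linarith)
  have hq1 : q ≤ 1 := hq ▸ (div_le_one (by linarith)).2 (by linarith)
  suffices ∃ p : ℝ[X], aeval A p i j = 0 ∧ ∀ x ∈ Icc lammin lammax,
      |x⁻¹ - p.eval x| ≤ c₀ * q ^ ((|(i : ℤ) - (j : ℤ)| : ℝ) / (β : ℝ)) by
    obtain ⟨p, hp0, hp⟩ := this
    simpa [hp0] using hA.norm_inv_sub_aeval_apply_le hpd.isUnit p (fun m => hp _ (heig m)) i j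
  rcases eq_or_ne i j with rfl | hij
  · refine ⟨0, by simp, fun x hx => ?_⟩
    rw [hc₀]
    simpa [abs_of_pos (hpos.trans_le hx.1)] using Or.inl (inv_anti₀ hpos hx.1)
  · set d := ((i : ℤ) - j).natAbs
    have hd : 0 < d := Int.natAbs_pos.2 (by omega)
    have hdR : (|(i : ℤ) - (j : ℤ)| : ℝ) = d := by simp [d, Nat.cast_natAbs]
    obtain ⟨p, hdeg, hp⟩ := exists_natDegree_le_abs_inv_sub_eval_le hpos hle ((d - 1) / β)
    refine ⟨p, Matrix.IsBanded.aeval hband hdeg i j ?_, fun x hx => (hp x hx).trans ?_⟩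
    · rw [← Int.natCast_natAbs]
      exact Nat.cast_lt.2 ((Nat.div_mul_le_self _ _).trans_lt (Nat.sub_lt hd one_pos))
    · rw [← hκ, ← hq, hdR]
      exact mul_le_mul (hc₀ ▸ le_max_right _ _) (pow_pred_div_add_one_le_rpow hq0 hq1 hd β)
        (pow_nonneg hq0 _) (hc₀ ▸ (le_max_left _ _).trans' (by positivity))

/-- **Demko–Moss–Smith decay bound.**
For a real symmetric positive definite `β`-banded matrix `A` with extreme eigenvalues
`λ_min ≤ λ_max`, condition number `κ = λ_max/λ_min`, `q = (√κ - 1)/(√κ + 1)` and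
`c₀ = max (1/λ_min) ((1 + √κ)²/(2 λ_max))`, the entries of the inverse satisfy
`|(A⁻¹)ᵢⱼ| ≤ c₀ q^{|i-j|/β}`. -/
theorem inv_banded_spd_decay
    (n : ℕ) (A : Matrix (Fin n) (Fin n) ℝ)
    (β : ℕ) (hβ : 1 ≤ β)
    (hsymm : A.IsSymm) (hpd : A.PosDef)
    (hband : ∀ i j : Fin n, (β : ℤ) < |(i : ℤ) - (j : ℤ)| → A i j = 0)
    (lammin lammax : ℝ)
    (hmin_mem : lammin ∈ spectrum ℝ A) (hmax_mem : lammax ∈ spectrum ℝ A)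
    (hmin : ∀ μ ∈ spectrum ℝ A, lammin ≤ μ) (hmax : ∀ μ ∈ spectrum ℝ A, μ ≤ lammax)
    (κ q c₀ : ℝ)
    (hκ : κ = lammax / lammin)
    (hq : q = (Real.sqrt κ - 1) / (Real.sqrt κ + 1))
    (hc₀ : c₀ = max (1 / lammin) ((1 + Real.sqrt κ) ^ 2 / (2 * lammax))) :
    ∀ i j : Fin n,
      |A⁻¹ i j| ≤ c₀ * q ^ ((|(i : ℤ) - (j : ℤ)| : ℝ) / (β : ℝ)) :=
  inv_banded_spd_decay_general n A β hpd hband lammin lammax hmin_mem hmin hmax κ q c₀ hκ hq hc₀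
end

section
/- Let A be an n×n real symmetric positive definite matrix with smallest eigenvalue λ_min > 0, and let X be the unique solution of A X + X A = e_{t₁} e_{t₂}^T. Then the diagonal-peak entry satisfies |X_{t₁,t₂}| ≤ (1/(2π)) ∫_{−∞}^{∞} 1/(λ_min² + ω²) dω = 1/(2 λ_min). -/
/-!
Diagonalize `A = U D Uᵀ` with `U` orthogonal and `D = diag d`, `d i ≥ λ_min`. Conjugating the
equation by `U` gives `D Y + Y D = Uᵀ e_{t₁} e_{t₂}ᵀ U` for `Y = Uᵀ X U`, which is solved entrywise:
`Y i j = U t₁ i * U t₂ j / (d i + d j)`. Hence `X t₁ t₂ = ∑ i j (U t₁ i * U t₂ j)² / (d i + d j)`,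
an average of the numbers `1 / (d i + d j) ≤ 1 / (2 λ_min)` with weights `(U t₁ i)² (U t₂ j)²`,
which sum to `1` because the rows of `U` are unit vectors. The integral is `π / λ_min` by the
substitution `ω = λ_min x` in `∫ 1 / (1 + x²) = π`.
-/

open Matrix MeasureTheory

theorem integral_one_div_sq_add_sq {a : ℝ} (ha : 0 < a) :
    ∫ ω : ℝ, 1 / (a ^ 2 + ω ^ 2) = Real.pi / a := by
  have h : (fun ω : ℝ => 1 / (a ^ 2 + ω ^ 2)) = fun ω => (a ^ 2)⁻¹ * (1 + (ω / a) ^ 2)⁻¹ := by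
    funext ω; field_simp
  rw [h, integral_const_mul, Measure.integral_comp_div (fun x : ℝ => (1 + x ^ 2)⁻¹) a,
    integral_univ_inv_one_add_sq, abs_of_pos ha, smul_eq_mul]
  field_simp

namespace Matrix

variable {n : Type*} [Fintype n] [DecidableEq n]

theorem diagonal_mul_add_mul_diagonal_apply {R : Type*} [CommSemiring R] (d : n → R)
    (Y : Matrix n n R) (i j : n) :
    (diagonal d * Y + Y * diagonal d) i j = (d i + d j) * Y i j := by
  simp only [add_apply, diagonal_mul, mul_diagonal]
  ring

theorem star_mul_single_mul_apply {R : Type*} [CommSemiring R] [StarRing R] (U : Matrix n n R)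
    (a b i j : n) (c : R) :
    (star U * single a b c * U) i j = star (U a i) * c * U b j := by
  simp [mul_apply, single, star_apply, ite_and, Finset.sum_ite_eq]

theorem sum_sq_apply_eq_one_of_mem_unitaryGroup {U : Matrix n n ℝ} (hU : U ∈ unitaryGroup n ℝ)
    (a : n) : ∑ i, U a i ^ 2 = 1 := by
  simpa [mul_apply, sq] using congrFun (congrFun (mem_unitaryGroup_iff.mp hU) a) a

theorem abs_sum_sum_sq_mul_sq_div_add_le {ι : Type*} [Fintype ι] {u v d : ι → ℝ} {c : ℝ}
    (hc : 0 < c) (hd : ∀ i, c ≤ d i) (hu : ∑ i, u i ^ 2 = 1) (hv : ∑ j, v j ^ 2 = 1) :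
    |∑ i, ∑ j, (u i * v j) ^ 2 / (d i + d j)| ≤ 1 / (2 * c) := by
  have hdd (i j : ι) : 2 * c ≤ d i + d j := by linarith [hd i, hd j]
  rw [abs_of_nonneg (Finset.sum_nonneg fun i _ => Finset.sum_nonneg fun j _ =>
    div_nonneg (sq_nonneg _) (by linarith [hdd i j]))]
  calc ∑ i, ∑ j, (u i * v j) ^ 2 / (d i + d j)
      ≤ ∑ i, ∑ j, (u i * v j) ^ 2 / (2 * c) := by
        gcongr with i _ j _
        exact hdd i j
    _ = (∑ i, u i ^ 2) * (∑ j, v j ^ 2) / (2 * c) := by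
        simp only [mul_pow, Finset.sum_mul_sum, Finset.sum_div]
    _ = 1 / (2 * c) := by rw [hu, hv, one_mul]

namespace IsHermitian

theorem lyapunov_single_apply {A X : Matrix n n ℝ} (hA : A.IsHermitian)
    (hd : ∀ i j, hA.eigenvalues i + hA.eigenvalues j ≠ 0) {a b : n}
    (hX : A * X + X * A = single a b 1) :
    X a b = ∑ i, ∑ j, (hA.eigenvectorUnitary a i * hA.eigenvectorUnitary b j) ^ 2 /
      (hA.eigenvalues i + hA.eigenvalues j) := by
  set u := hA.eigenvectorUnitary
  set U : Matrix n n ℝ := ↑u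
  set d := hA.eigenvalues
  set φ := Unitary.conjStarAlgAut ℝ _ (star u)
  have hφA : φ A = diagonal d := hA.conjStarAlgAut_star_eigenvectorUnitary
  have hY : diagonal d * φ X + φ X * diagonal d = star U * single a b 1 * U := by
    rw [← hφA, ← map_mul, ← map_mul, ← map_add, hX, Unitary.conjStarAlgAut_star_apply]
  have hYij (i j : n) : φ X i j = U a i * U b j / (d i + d j) := by
    rw [eq_div_iff (hd i j), mul_comm, ← diagonal_mul_add_mul_diagonal_apply, hY,
      star_mul_single_mul_apply]
    simp
  have hXY : X = U * φ X * star U := by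
    have h := (Unitary.conjStarAlgAut ℝ _ u).apply_symm_apply X
    rw [Unitary.conjStarAlgAut_symm] at h
    exact h.symm
  rw [hXY, mul_mul_apply]
  simp only [dotProduct, mulVec, transpose_apply, star_apply, star_trivial, hYij, Finset.mul_sum]
  refine Finset.sum_congr rfl fun i _ => Finset.sum_congr rfl fun j _ => ?_
  ring

theorem abs_lyapunov_single_apply_le {A X : Matrix n n ℝ} (hA : A.IsHermitian) {c : ℝ}
    (hc : 0 < c) (hcA : ∀ i, c ≤ hA.eigenvalues i) {a b : n}
    (hX : A * X + X * A = single a b 1) : |X a b| ≤ 1 / (2 * c) := by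
  have hU := hA.eigenvectorUnitary.2
  rw [hA.lyapunov_single_apply (fun i j => by linarith [hcA i, hcA j]) hX]
  exact abs_sum_sum_sq_mul_sq_div_add_le hc hcA
    (sum_sq_apply_eq_one_of_mem_unitaryGroup hU a) (sum_sq_apply_eq_one_of_mem_unitaryGroup hU b)

end IsHermitian

end Matrix

theorem lyapunov_entry_peak_bound_general
    (n : ℕ) (A : Matrix (Fin n) (Fin n) ℝ)
    (hsymm : A.IsSymm)
    (lammin : ℝ) (hpos : 0 < lammin)
    (hmin : ∀ μ ∈ spectrum ℝ A, lammin ≤ μ)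
    (t₁ t₂ : Fin n) (X : Matrix (Fin n) (Fin n) ℝ)
    (hX : A * X + X * A = Matrix.single t₁ t₂ 1) :
    (1 / (2 * Real.pi)) * (∫ ω : ℝ, 1 / (lammin ^ 2 + ω ^ 2)) = 1 / (2 * lammin) ∧
    |X t₁ t₂| ≤ 1 / (2 * lammin) := by
  have hA : A.IsHermitian := isHermitian_iff_isSymm.mpr hsymm
  refine ⟨?_, hA.abs_lyapunov_single_apply_le hpos
    (fun i => hmin _ (hA.eigenvalues_mem_spectrum_real i)) hX⟩
  rw [integral_one_div_sq_add_sq hpos]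
  field_simp [Real.pi_ne_zero]

/-- **Bound on the peak entry of the Lyapunov solution.**
`A` real symmetric positive definite with smallest eigenvalue `λ_min > 0`, `X` solves
`A X + X A = e_{t₁} e_{t₂}ᵀ`. Then `|X_{t₁,t₂}| ≤ (1/(2π)) ∫ 1/(λ_min² + ω²) dω = 1/(2 λ_min)`. -/
theorem lyapunov_entry_peak_bound
    (n : ℕ) (A : Matrix (Fin n) (Fin n) ℝ)
    (hsymm : A.IsSymm) (hpd : A.PosDef)
    (lammin : ℝ) (hpos : 0 < lammin)
    (hmin_mem : lammin ∈ spectrum ℝ A)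
    (hmin : ∀ μ ∈ spectrum ℝ A, lammin ≤ μ)
    (t₁ t₂ : Fin n) (X : Matrix (Fin n) (Fin n) ℝ)
    (hX : A * X + X * A = Matrix.single t₁ t₂ 1) :
    (1 / (2 * Real.pi)) * (∫ ω : ℝ, 1 / (lammin ^ 2 + ω ^ 2)) = 1 / (2 * lammin) ∧
    |X t₁ t₂| ≤ 1 / (2 * lammin) :=
  lyapunov_entry_peak_bound_general n A hsymm lammin hpos hmin t₁ t₂ X hX
end

section
/- Let A be an n×n Hermitian positive definite complex matrix and fix indices i, j. Then the function ω ↦ (iωI + A)^{-1} e_i e_j^T ((iωI + A)^H)^{-1} is Bochner integrable on ℝ, and the matrix X = (1/(2π)) ∫_{−∞}^{∞} (iωI + A)^{-1} e_i e_j^T ((iωI + A)^H)^{-1} dω satisfies A X + X A = e_i e_j^T. -/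
/-!
Diagonalize `A = U D Uᴴ` with `U` unitary and `D = diag(d)`, `d > 0`. Then
`(iωI + A)⁻¹ = U (iωI + D)⁻¹ Uᴴ` and `((iωI + A)ᴴ)⁻¹ = U (D - iωI)⁻¹ Uᴴ`, so in the eigenbasis
the integrand is the entrywise product of `F = Uᴴ eᵢ eⱼᵀ U` with the scalar kernel
`(d_p + iω)⁻¹ (d_q - iω)⁻¹`. This kernel is dominated by Cauchy densities, and pairing `ω`
with `-ω` leaves only its real part `(d_p + d_q)⁻¹ (d_p / (d_p² + ω²) + d_q / (d_q² + ω²))`,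
whose integral is `2π / (d_p + d_q)`. Hence `X = U Y Uᴴ` with `Y_pq = F_pq / (d_p + d_q)`,
and this `Y` solves the diagonal Lyapunov equation `D Y + Y D = F` entrywise.
-/

open Matrix MeasureTheory
open scoped ComplexOrder

attribute [local instance] Matrix.frobeniusNormedAddCommGroup Matrix.frobeniusNormedSpace

open Real Complex ProbabilityTheory

lemma inv_sq_add_sq_eq_cauchyPDFReal {a : ℝ} (ha : 0 < a) (x : ℝ) :
    (a ^ 2 + x ^ 2)⁻¹ = π / a * cauchyPDFReal 0 a.toNNReal x := by
  rw [cauchyPDFReal_def, Real.coe_toNNReal _ ha.le]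
  field_simp
  ring

theorem integrable_inv_sq_add_sq {a : ℝ} (ha : 0 < a) :
    Integrable fun x : ℝ => (a ^ 2 + x ^ 2)⁻¹ := by
  simpa only [inv_sq_add_sq_eq_cauchyPDFReal ha] using (integrable_cauchyPDFReal 0).const_mul _

theorem integral_univ_inv_sq_add_sq {a : ℝ} (ha : 0 < a) :
    ∫ x : ℝ, (a ^ 2 + x ^ 2)⁻¹ = π / a := by
  simp only [inv_sq_add_sq_eq_cauchyPDFReal ha, integral_const_mul,
    integral_cauchyPDFReal_eq_one 0 (Real.toNNReal_pos.2 ha).ne', mul_one]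

lemma sq_norm_inv_add_mul_I (a x : ℝ) : ‖((a : ℂ) + x * I)⁻¹‖ ^ 2 = (a ^ 2 + x ^ 2)⁻¹ := by
  rw [norm_inv, inv_pow, Complex.sq_norm, Complex.normSq_add_mul_I]

section CauchyKernel

variable {a b : ℝ}

theorem integrable_inv_add_mul_I_mul_inv_sub_mul_I (ha : 0 < a) (hb : 0 < b) :
    Integrable fun x : ℝ => ((a : ℂ) + x * I)⁻¹ * ((b : ℂ) - x * I)⁻¹ := by
  refine (((integrable_inv_sq_add_sq ha).add (integrable_inv_sq_add_sq hb)).div_const 2).mono'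
    (by fun_prop) (Filter.Eventually.of_forall fun x => ?_)
  have hnorm_a := sq_norm_inv_add_mul_I a x
  have hnorm_b := sq_norm_inv_add_mul_I b (-x)
  rw [ofReal_neg, neg_mul, ← sub_eq_add_neg, neg_sq] at hnorm_b
  rw [norm_mul, Pi.add_apply, ← hnorm_a, ← hnorm_b]
  nlinarith [sq_nonneg (‖((a : ℂ) + x * I)⁻¹‖ - ‖((b : ℂ) - x * I)⁻¹‖)]

lemma inv_add_mul_I_mul_inv_sub_mul_I_add_neg (ha : 0 < a) (hb : 0 < b) (x : ℝ) :
    ((a : ℂ) + x * I)⁻¹ * ((b : ℂ) - x * I)⁻¹ +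
        ((a : ℂ) + (-x : ℝ) * I)⁻¹ * ((b : ℂ) - (-x : ℝ) * I)⁻¹ =
      ((2 / (a + b) * (a * (a ^ 2 + x ^ 2)⁻¹ + b * (b ^ 2 + x ^ 2)⁻¹) : ℝ) : ℂ) := by
  have : a + b ≠ 0 := by positivity
  have : a ^ 2 + x ^ 2 ≠ 0 := by positivity
  have : b ^ 2 + x ^ 2 ≠ 0 := by positivity
  apply Complex.ext <;>
    simp only [ofReal_neg, neg_mul, sub_neg_eq_add, add_re, add_im, mul_re, mul_im, inv_re, inv_im,
      sub_re, sub_im, ofReal_re, ofReal_im, I_re, I_im, normSq_apply, mul_zero, mul_one, sub_self,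
      add_zero, zero_add, sub_zero, zero_sub, mul_neg, neg_neg, neg_zero, neg_re, neg_im]
  · field_simp
    ring
  · ring

theorem integral_inv_add_mul_I_mul_inv_sub_mul_I (ha : 0 < a) (hb : 0 < b) :
    ∫ x : ℝ, ((a : ℂ) + x * I)⁻¹ * ((b : ℂ) - x * I)⁻¹ = ((2 * π / (a + b) : ℝ) : ℂ) := by
  set f : ℝ → ℂ := fun x => ((a : ℂ) + x * I)⁻¹ * ((b : ℂ) - x * I)⁻¹
  have hf : Integrable f := integrable_inv_add_mul_I_mul_inv_sub_mul_I ha hb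
  have hcauchy (c : ℝ) (hc : 0 < c) := (integrable_inv_sq_add_sq hc).const_mul c
  suffices 2 * ∫ x, f x = 2 * ((2 * π / (a + b) : ℝ) : ℂ) by simpa using this
  calc 2 * ∫ x, f x = ∫ x, (f x + f (-x)) := by
        rw [integral_add hf hf.comp_neg, integral_neg_eq_self]
        ring
    _ = ((∫ x : ℝ, 2 / (a + b) * (a * (a ^ 2 + x ^ 2)⁻¹ + b * (b ^ 2 + x ^ 2)⁻¹) : ℝ) : ℂ) := by
        simp only [f, inv_add_mul_I_mul_inv_sub_mul_I_add_neg ha hb]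
        exact integral_ofReal
    _ = 2 * ((2 * π / (a + b) : ℝ) : ℂ) := by
        rw [integral_const_mul, integral_add (hcauchy a ha) (hcauchy b hb), integral_const_mul,
          integral_const_mul, integral_univ_inv_sq_add_sq ha, integral_univ_inv_sq_add_sq hb]
        have : 2 / (a + b) * (a * (π / a) + b * (π / b)) = 2 * (2 * π / (a + b)) := by
          field_simp
          ring
        rw [this, ofReal_mul, ofReal_ofNat]

end CauchyKernel

namespace Matrix

section Integral

variable {α : Type*} [MeasurableSpace α] {μ : Measure α} {m n : Type*} [Fintype m] [Fintype n]
  {g : m → n → α → ℂ}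

theorem integrable_of_forall_integrable (hg : ∀ p q, Integrable (g p q) μ) :
    @Integrable (Matrix m n ℂ) frobeniusNormedAddCommGroup.toUniformSpace.toTopologicalSpace _ α _
      (fun x => of fun p q => g p q x) μ := by
  classical
  have hsum (x : α) : (of fun p q => g p q x) = ∑ p, ∑ q, g p q x • single p q (1 : ℂ) := by
    simp only [smul_single, smul_eq_mul, mul_one]
    exact matrix_eq_sum_single _
  simp only [hsum]
  exact integrable_finsetSum _ fun p _ => integrable_finsetSum _ fun q _ => (hg p q).smul_const _

theorem integral_of (hg : ∀ p q, Integrable (g p q) μ) :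
    ∫ x, (of fun p q => g p q x) ∂μ = of fun p q => ∫ x, g p q x ∂μ := by
  ext p q
  exact ((entryLinearMap ℂ ℂ p q).toContinuousLinearMap.integral_comp_comm
    (integrable_of_forall_integrable hg)).symm

end Integral

section Diagonal

variable {n : Type*}

theorem diagonal_mul_add_mul_diagonal_eq {K : Type*} [Field K] [Fintype n] [DecidableEq n]
    (d : n → K) (F : Matrix n n K) (hd : ∀ p q, d p + d q ≠ 0) :
    diagonal d * (of fun p q => F p q / (d p + d q)) +
      (of fun p q => F p q / (d p + d q)) * diagonal d = F := by
  ext p q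
  simp only [add_apply, diagonal_mul, mul_diagonal, of_apply]
  field_simp [hd p q]

/-- `(iωI + D)⁻¹ F ((iωI + D)ᴴ)⁻¹` for `D = diagonal d`, written entrywise. -/
noncomputable def diagonalResolventSandwich (d : n → ℝ) (F : Matrix n n ℂ) (ω : ℝ) :
    Matrix n n ℂ :=
  of fun p q => ((d p : ℂ) + ω * I)⁻¹ * ((d q : ℂ) - ω * I)⁻¹ * F p q

variable {d : n → ℝ}

theorem integrable_diagonalResolventSandwich_apply (hd : ∀ k, 0 < d k) (F : Matrix n n ℂ)
    (p q : n) :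
    Integrable fun ω => diagonalResolventSandwich d F ω p q :=
  (integrable_inv_add_mul_I_mul_inv_sub_mul_I (hd p) (hd q)).mul_const _

variable [Fintype n]

theorem integrable_diagonalResolventSandwich (hd : ∀ k, 0 < d k) (F : Matrix n n ℂ) :
    @Integrable (Matrix n n ℂ) frobeniusNormedAddCommGroup.toUniformSpace.toTopologicalSpace _ ℝ _
      (diagonalResolventSandwich d F) volume :=
  integrable_of_forall_integrable (integrable_diagonalResolventSandwich_apply hd F)

theorem integral_diagonalResolventSandwich (hd : ∀ k, 0 < d k) (F : Matrix n n ℂ) :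
    ∫ ω, diagonalResolventSandwich d F ω =
      ((2 * π : ℝ) : ℂ) • of fun p q => F p q / (d p + d q) := by
  refine (integral_of (integrable_diagonalResolventSandwich_apply hd F)).trans ?_
  ext p q
  have : (d p : ℂ) + d q ≠ 0 := by exact_mod_cast (add_pos (hd p) (hd q)).ne'
  simp only [diagonalResolventSandwich, integral_mul_const,
    integral_inv_add_mul_I_mul_inv_sub_mul_I (hd p) (hd q), of_apply, smul_apply, smul_eq_mul]
  push_cast
  field_simp

end Diagonal

section Hermitian

variable {𝕜 : Type*} [RCLike 𝕜] {n : Type*} [Fintype n] [DecidableEq n]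

variable {A : Matrix n n 𝕜} (hA : A.IsHermitian)

noncomputable abbrev IsHermitian.eigenbasisConj : Matrix n n 𝕜 ≃⋆ₐ[𝕜] Matrix n n 𝕜 :=
  Unitary.conjStarAlgAut 𝕜 _ hA.eigenvectorUnitary

theorem IsHermitian.inv_smul_one_add {z : 𝕜} (hz : ∀ k, z + hA.eigenvalues k ≠ 0) :
    (z • 1 + A)⁻¹ = hA.eigenbasisConj (diagonal fun k => (z + hA.eigenvalues k)⁻¹) := by
  have hshift : z • 1 + A = hA.eigenbasisConj (diagonal fun k => z + hA.eigenvalues k) := by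
    conv_lhs => rw [hA.spectral_theorem]
    rw [← map_one hA.eigenbasisConj, ← map_smul, ← map_add, smul_one_eq_diagonal, diagonal_add]
    rfl
  rw [hshift]
  refine inv_eq_left_inv ?_
  rw [← map_mul, diagonal_mul_diagonal]
  simp [inv_mul_cancel₀ (hz _)]

theorem IsHermitian.mul_eigenbasisConj_add_eigenbasisConj_mul (E : Matrix n n 𝕜)
    (hd : ∀ p q, hA.eigenvalues p + hA.eigenvalues q ≠ 0) :
    A * hA.eigenbasisConj (of fun p q =>
        hA.eigenbasisConj.symm E p q / (hA.eigenvalues p + hA.eigenvalues q)) +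
      hA.eigenbasisConj (of fun p q =>
        hA.eigenbasisConj.symm E p q / (hA.eigenvalues p + hA.eigenvalues q)) * A = E := by
  set φ := hA.eigenbasisConj
  set Y := of fun p q => φ.symm E p q / (hA.eigenvalues p + hA.eigenvalues q)
  set D := diagonal (RCLike.ofReal ∘ hA.eigenvalues : n → 𝕜)
  have hd' (p q : n) : (hA.eigenvalues p : 𝕜) + hA.eigenvalues q ≠ 0 := by exact_mod_cast hd p q
  calc A * φ Y + φ Y * A = φ D * φ Y + φ Y * φ D := by rw [← hA.spectral_theorem]
    _ = φ (D * Y + Y * D) := by rw [map_add, map_mul, map_mul]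
    _ = E := (congrArg φ (diagonal_mul_add_mul_diagonal_eq _ _ hd')).trans (φ.apply_symm_apply E)

end Hermitian

theorem IsHermitian.resolvent_sandwich_eq_eigenbasisConj {n : Type*} [Fintype n]
    [DecidableEq n] {A : Matrix n n ℂ} (hA : A.IsHermitian) (hd : ∀ k, hA.eigenvalues k ≠ 0)
    (E : Matrix n n ℂ) (ω : ℝ) :
    ((I * ω) • (1 : Matrix n n ℂ) + A)⁻¹ * E * (((I * ω) • (1 : Matrix n n ℂ) + A)ᴴ)⁻¹ =
      hA.eigenbasisConj
        (diagonalResolventSandwich hA.eigenvalues (hA.eigenbasisConj.symm E) ω) := by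
  have hshift (z : ℂ) (hz : z.re = 0) (k : n) : z + hA.eigenvalues k ≠ 0 := fun h => by
    simpa [hz, hd k] using congrArg re h
  rw [conjTranspose_add, conjTranspose_smul, conjTranspose_one, hA.eq,
    hA.inv_smul_one_add (hshift _ (by simp)), hA.inv_smul_one_add (hshift _ (by simp)),
    ← hA.eigenbasisConj.apply_symm_apply E, ← map_mul, ← map_mul, StarAlgEquiv.symm_apply_apply]
  congr 1
  ext p q
  simp only [diagonalResolventSandwich, diagonal_mul, mul_diagonal, of_apply, coe_algebraMap,
    RCLike.star_def, map_mul, conj_I, conj_ofReal]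
  ring

end Matrix

/-- **Resolvent-integral closed form with single-entry right-hand side.**
For `A` Hermitian positive definite, the function
`ω ↦ (iωI + A)⁻¹ eᵢ eⱼᵀ ((iωI + A)ᴴ)⁻¹` is Bochner integrable on `ℝ` and
`X = (1/(2π)) ∫_ℝ (iωI + A)⁻¹ eᵢ eⱼᵀ ((iωI + A)ᴴ)⁻¹ dω` satisfies `A X + X A = eᵢ eⱼᵀ`. -/
theorem lyapunov_resolvent_integral_single_entry
    (n : ℕ) (A : Matrix (Fin n) (Fin n) ℂ)
    (hA : A.PosDef) (i j : Fin n) :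
    @Integrable (Matrix (Fin n) (Fin n) ℂ)
      frobeniusNormedAddCommGroup.toUniformSpace.toTopologicalSpace _ ℝ _
      (fun ω : ℝ => ((Complex.I * ω) • (1 : Matrix (Fin n) (Fin n) ℂ) + A)⁻¹ *
        Matrix.single i j (1 : ℂ) *
        ((((Complex.I * ω) • (1 : Matrix (Fin n) (Fin n) ℂ) + A)ᴴ)⁻¹)) volume ∧
    A * ((1 / (2 * Real.pi)) •
        ∫ ω : ℝ, ((Complex.I * ω) • (1 : Matrix (Fin n) (Fin n) ℂ) + A)⁻¹ *
          Matrix.single i j (1 : ℂ) *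
          ((((Complex.I * ω) • (1 : Matrix (Fin n) (Fin n) ℂ) + A)ᴴ)⁻¹)) +
      ((1 / (2 * Real.pi)) •
        ∫ ω : ℝ, ((Complex.I * ω) • (1 : Matrix (Fin n) (Fin n) ℂ) + A)⁻¹ *
          Matrix.single i j (1 : ℂ) *
          ((((Complex.I * ω) • (1 : Matrix (Fin n) (Fin n) ℂ) + A)ᴴ)⁻¹)) * A
      = Matrix.single i j (1 : ℂ) := by
  set φ := hA.1.eigenbasisConj
  have hd := hA.eigenvalues_pos
  set K := diagonalResolventSandwich hA.1.eigenvalues (φ.symm (single i j 1))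
  let L := φ.toAlgEquiv.toLinearEquiv.toContinuousLinearEquiv
  simp only [hA.1.resolvent_sandwich_eq_eigenbasisConj (fun k => (hd k).ne')]
  refine ⟨L.integrable_comp_iff.2 (integrable_diagonalResolventSandwich hd _), ?_⟩
  rw [show ∫ ω, φ (K ω) = L (∫ ω, K ω) from L.integral_comp_comm _,
    integral_diagonalResolventSandwich hd, map_smul, Complex.coe_smul, smul_smul,
    one_div_mul_cancel (by positivity), one_smul]
  exact hA.1.mul_eigenbasisConj_add_eigenbasisConj_mul _ fun p q => (add_pos (hd p) (hd q)).ne'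
end

section
/- Let A be an n×n real matrix, let V be an n×m real matrix with orthonormal columns (V^T V = I_m), let v be a unit vector in ℝⁿ orthogonal to the columns of V (V^T v = 0), let τ ∈ ℝ, and set T = V^T A V. Assume the Arnoldi relation A V = V T + τ v e_m^T. Let β₀ ≥ 0, let Y be an m×m real symmetric matrix satisfying T Y + Y T^T = β₀² e₁ e₁^T, and set X_m = V Y V^T and R = A X_m + X_m A^T − β₀² (V e₁)(V e₁)^T. Then ‖R‖₂ = |τ| · ‖Y e_m‖₂ and ‖R‖_F = √2 · |τ| · ‖Y e_m‖₂. -/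
open Matrix

/-- The spectral norm (operator norm induced by the Euclidean vector norm) of a real
square matrix. -/
noncomputable def spectralNorm' {k : ℕ} (R : Matrix (Fin k) (Fin k) ℝ) : ℝ :=
  ‖Matrix.toEuclideanCLM (𝕜 := ℝ) R‖

/-- The Frobenius norm of a real matrix. -/
noncomputable def frobeniusNorm' {k l : ℕ} (R : Matrix (Fin k) (Fin l) ℝ) : ℝ :=
  Real.sqrt (∑ i, ∑ j, (R i j) ^ 2)

/-- The Euclidean norm of a real vector. -/
noncomputable def euclNorm' {k : ℕ} (x : Fin k → ℝ) : ℝ :=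
  Real.sqrt (∑ i, (x i) ^ 2)

/-! The Arnoldi relation and the reduced equation `T Y + Y Tᵀ = β₀² e₁e₁ᵀ` collapse the residual
to the symmetric rank-two matrix `R = τ (v wᵀ + w vᵀ)` with `w = V Y e_m`, and `‖w‖ = ‖Y e_m‖`
because `V` has orthonormal columns. As `v` is a unit vector orthogonal to `w`,
`R x = τ (⟪w, x⟫ v + ⟪v, x⟫ w)` has norm `|τ| √(⟪w, x⟫² + ⟪v, x⟫² ‖w‖²)`; Cauchy–Schwarz
applied to the component of `x` orthogonal to `v` bounds this by `|τ| ‖w‖ ‖x‖`, with equality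
at `x = v`. The squared Frobenius norm of `v wᵀ + w vᵀ` is `2 (‖v‖² ‖w‖² + ⟪v, w⟫²) = 2 ‖w‖²`. -/

open scoped RealInnerProductSpace

section Residual

variable {R ι κ : Type*} [CommRing R] [Fintype ι] [Fintype κ]

theorem galerkin_residual_eq_of_arnoldi (A : Matrix ι ι R) (V : Matrix ι κ R) (T Y : Matrix κ κ R)
    (v : ι → R) (e f : κ → R) (τ c : R)
    (hArnoldi : A * V = V * T + τ • vecMulVec v e) (hYsymm : Yᵀ = Y)
    (hY : T * Y + Y * Tᵀ = c • vecMulVec f f) :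
    A * (V * Y * Vᵀ) + V * Y * Vᵀ * Aᵀ - c • vecMulVec (V *ᵥ f) (V *ᵥ f) =
      τ • (vecMulVec v (V *ᵥ (Y *ᵥ e)) + vecMulVec (V *ᵥ (Y *ᵥ e)) v) := by
  have hAX : A * (V * Y * Vᵀ) = V * (T * Y) * Vᵀ + τ • vecMulVec v (V *ᵥ (Y *ᵥ e)) := by
    rw [← Matrix.mul_assoc, ← Matrix.mul_assoc, hArnoldi, Matrix.add_mul, Matrix.add_mul,
      Matrix.smul_mul, Matrix.smul_mul, vecMulVec_mul, vecMulVec_mul, vecMul_transpose,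
      ← mulVec_transpose, hYsymm, Matrix.mul_assoc V]
  have hXA : V * Y * Vᵀ * Aᵀ = (A * (V * Y * Vᵀ))ᵀ := by
    simp [Matrix.transpose_mul, hYsymm, Matrix.mul_assoc]
  have hproj : V * (c • vecMulVec f f) * Vᵀ = c • vecMulVec (V *ᵥ f) (V *ᵥ f) := by
    rw [Matrix.mul_smul, Matrix.smul_mul, mul_vecMulVec, vecMulVec_mul, vecMul_transpose]
  rw [hXA, hAX, ← hproj, ← hY]
  simp only [transpose_add, transpose_smul, transpose_vecMulVec, Matrix.transpose_mul,
    transpose_transpose, hYsymm, Matrix.mul_add, Matrix.add_mul, smul_add]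
  simp only [Matrix.mul_assoc]
  abel

end Residual

section RankTwo

variable {E : Type*} [NormedAddCommGroup E] [InnerProductSpace ℝ E]

theorem norm_inner_smul_add_inner_smul_le {u w : E} (hu : ‖u‖ = 1) (huw : ⟪u, w⟫ = 0)
    (x : E) :
    ‖⟪w, x⟫ • u + ⟪u, x⟫ • w‖ ≤ ‖w‖ * ‖x‖ := by
  set x' := x - ⟪u, x⟫ • u
  have hwu : ⟪w, u⟫ = 0 := by rwa [real_inner_comm]
  have hw_x' : ⟪w, x'⟫ = ⟪w, x⟫ := by simp [x', inner_sub_right, inner_smul_right, hwu]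
  have hx : ‖x‖ ^ 2 = ‖x'‖ ^ 2 + ⟪u, x⟫ ^ 2 := by
    have hux' : ⟪x', ⟪u, x⟫ • u⟫ = 0 := by
      simp [x', inner_sub_left, inner_smul_right, inner_smul_left, hu, real_inner_comm u x]
    rw [← sub_add_cancel x (⟪u, x⟫ • u), norm_add_sq_real, hux', norm_smul, hu]
    simp [x']
  have hcs : ⟪w, x'⟫ ^ 2 ≤ ‖w‖ ^ 2 * ‖x'‖ ^ 2 := by
    rw [← mul_pow, ← sq_abs]
    exact pow_le_pow_left₀ (abs_nonneg _) (abs_real_inner_le_norm w x') 2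
  have hlhs : ‖⟪w, x⟫ • u + ⟪u, x⟫ • w‖ ^ 2 = ⟪w, x⟫ ^ 2 + ⟪u, x⟫ ^ 2 * ‖w‖ ^ 2 := by
    rw [norm_add_sq_real, norm_smul, norm_smul, hu]
    simp [inner_smul_left, inner_smul_right, huw, mul_pow]
  refine le_of_sq_le_sq ?_ (by positivity)
  rw [hlhs, mul_pow, hx, ← hw_x']
  nlinarith

theorem norm_innerSL_smulRight_add_innerSL_smulRight {u w : E} (hu : ‖u‖ = 1)
    (huw : ⟪u, w⟫ = 0) :
    ‖(innerSL ℝ w).smulRight u + (innerSL ℝ u).smulRight w‖ = ‖w‖ := by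
  refine le_antisymm (ContinuousLinearMap.opNorm_le_bound _ (norm_nonneg w) fun x => ?_) ?_
  · simpa using norm_inner_smul_add_inner_smul_le hu huw x
  · simpa [real_inner_comm u w, huw, hu] using
      ((innerSL ℝ w).smulRight u + (innerSL ℝ u).smulRight w).le_opNorm u

end RankTwo

theorem toEuclideanCLM_vecMulVec_add_vecMulVec {ι : Type*} [Fintype ι] [DecidableEq ι]
    (u w : ι → ℝ) :
    toEuclideanCLM (𝕜 := ℝ) (vecMulVec u w + vecMulVec w u) =
      (innerSL ℝ (WithLp.toLp 2 w)).smulRight (WithLp.toLp 2 u) +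
        (innerSL ℝ (WithLp.toLp 2 u)).smulRight (WithLp.toLp 2 w) := by
  ext x i
  simp [vecMulVec_mulVec, EuclideanSpace.inner_eq_star_dotProduct, dotProduct_comm, mul_comm]

theorem euclNorm'_eq_norm_toLp {k : ℕ} (x : Fin k → ℝ) : euclNorm' x = ‖WithLp.toLp 2 x‖ := by
  simp [euclNorm', EuclideanSpace.norm_eq]

theorem euclNorm'_eq_sqrt_dotProduct {k : ℕ} (x : Fin k → ℝ) : euclNorm' x = √(x ⬝ᵥ x) := by
  simp [euclNorm', dotProduct, sq]

theorem euclNorm'_mulVec_of_transpose_mul_self {k l : ℕ} {V : Matrix (Fin k) (Fin l) ℝ}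
    (hV : Vᵀ * V = 1) (x : Fin l → ℝ) : euclNorm' (V *ᵥ x) = euclNorm' x := by
  rw [euclNorm'_eq_sqrt_dotProduct, euclNorm'_eq_sqrt_dotProduct, dotProduct_mulVec,
    ← mulVec_transpose, mulVec_mulVec, hV, one_mulVec]

theorem spectralNorm'_smul {k : ℕ} (c : ℝ) (M : Matrix (Fin k) (Fin k) ℝ) :
    spectralNorm' (c • M) = |c| * spectralNorm' M := by
  simp [spectralNorm', norm_smul]

theorem spectralNorm'_vecMulVec_add_vecMulVec {k : ℕ} {u w : Fin k → ℝ} (hu : u ⬝ᵥ u = 1)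
    (huw : u ⬝ᵥ w = 0) : spectralNorm' (vecMulVec u w + vecMulVec w u) = euclNorm' w := by
  have hu' : ‖WithLp.toLp 2 u‖ = 1 := by
    rw [← euclNorm'_eq_norm_toLp, euclNorm'_eq_sqrt_dotProduct, hu, Real.sqrt_one]
  have huw' : ⟪WithLp.toLp 2 u, WithLp.toLp 2 w⟫ = 0 := by
    simpa [EuclideanSpace.inner_toLp_toLp, dotProduct_comm] using huw
  rw [spectralNorm', toEuclideanCLM_vecMulVec_add_vecMulVec,
    norm_innerSL_smulRight_add_innerSL_smulRight hu' huw', euclNorm'_eq_norm_toLp]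

theorem frobeniusNorm'_smul {k l : ℕ} (c : ℝ) (M : Matrix (Fin k) (Fin l) ℝ) :
    frobeniusNorm' (c • M) = |c| * frobeniusNorm' M := by
  simp only [frobeniusNorm', Matrix.smul_apply, smul_eq_mul, mul_pow, ← Finset.mul_sum]
  rw [Real.sqrt_mul (sq_nonneg c), Real.sqrt_sq_eq_abs]

theorem sum_sum_vecMulVec_add_vecMulVec_sq {R ι : Type*} [CommRing R] [Fintype ι] (u w : ι → R) :
    ∑ i, ∑ j, (vecMulVec u w + vecMulVec w u) i j ^ 2 =
      2 * ((u ⬝ᵥ u) * (w ⬝ᵥ w) + (u ⬝ᵥ w) ^ 2) := by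
  have h : ∀ i j, (vecMulVec u w + vecMulVec w u) i j ^ 2 =
      u i * u i * (w j * w j) + w i * w i * (u j * u j) + 2 * (u i * w i) * (u j * w j) := by
    intro i j
    simp only [Matrix.add_apply, vecMulVec_apply]
    ring
  simp only [h, dotProduct, Finset.sum_add_distrib, ← Finset.mul_sum, ← Finset.sum_mul]
  ring

theorem frobeniusNorm'_vecMulVec_add_vecMulVec {k : ℕ} {u w : Fin k → ℝ} (hu : u ⬝ᵥ u = 1)
    (huw : u ⬝ᵥ w = 0) :
    frobeniusNorm' (vecMulVec u w + vecMulVec w u) = √2 * euclNorm' w := by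
  rw [frobeniusNorm', sum_sum_vecMulVec_add_vecMulVec_sq, hu, huw, euclNorm'_eq_sqrt_dotProduct,
    ← Real.sqrt_mul zero_le_two]
  norm_num

theorem galerkin_residual_norm_general
    (n m : ℕ)
    (A : Matrix (Fin n) (Fin n) ℝ)
    (V : Matrix (Fin n) (Fin (m + 1)) ℝ)
    (v : Fin n → ℝ) (τ : ℝ)
    (T : Matrix (Fin (m + 1)) (Fin (m + 1)) ℝ)
    (hVorth : Vᵀ * V = 1)
    (hvunit : v ⬝ᵥ v = 1)
    (hvV : Vᵀ *ᵥ v = 0)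
    (hArnoldi : A * V = V * T + τ • Matrix.vecMulVec v (Pi.single (Fin.last m) 1))
    (β₀ : ℝ)
    (Y : Matrix (Fin (m + 1)) (Fin (m + 1)) ℝ)
    (hYsymm : Yᵀ = Y)
    (hY : T * Y + Y * Tᵀ = (β₀ ^ 2) • Matrix.single 0 0 (1 : ℝ)) :
    spectralNorm'
        (A * (V * Y * Vᵀ) + (V * Y * Vᵀ) * Aᵀ -
          (β₀ ^ 2) • Matrix.vecMulVec (V *ᵥ Pi.single 0 1) (V *ᵥ Pi.single 0 1)) =
      |τ| * euclNorm' (fun i => Y i (Fin.last m)) ∧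
    frobeniusNorm'
        (A * (V * Y * Vᵀ) + (V * Y * Vᵀ) * Aᵀ -
          (β₀ ^ 2) • Matrix.vecMulVec (V *ᵥ Pi.single 0 1) (V *ᵥ Pi.single 0 1)) =
      Real.sqrt 2 * |τ| * euclNorm' (fun i => Y i (Fin.last m)) := by
  rw [single_eq_single_vecMulVec_single] at hY
  have hR := galerkin_residual_eq_of_arnoldi A V T Y v _ _ τ _ hArnoldi hYsymm hY
  rw [mulVec_single_one Y] at hR
  have hvw : v ⬝ᵥ (V *ᵥ Y.col (Fin.last m)) = 0 := by
    rw [dotProduct_mulVec, ← mulVec_transpose, hvV, zero_dotProduct]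
  have hw := euclNorm'_mulVec_of_transpose_mul_self hVorth (Y.col (Fin.last m))
  rw [hR, spectralNorm'_smul, frobeniusNorm'_smul,
    spectralNorm'_vecMulVec_add_vecMulVec hvunit hvw,
    frobeniusNorm'_vecMulVec_add_vecMulVec hvunit hvw, hw]
  exact ⟨rfl, by rw [← mul_assoc, mul_comm |τ|]; rfl⟩

/-- **Residual norm of the Galerkin approximation.**
With the Arnoldi relation `A V = V T + τ v e_mᵀ` (`V` with orthonormal columns, `v` a unit
vector orthogonal to the columns of `V`, `T = Vᵀ A V`), if the symmetric matrix `Y` solves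
the reduced equation `T Y + Y Tᵀ = β₀² e₁ e₁ᵀ`, then the residual
`R = A X_m + X_m Aᵀ - β₀² (V e₁)(V e₁)ᵀ` of `X_m = V Y Vᵀ` satisfies
`‖R‖₂ = |τ| ‖Y e_m‖₂` and `‖R‖_F = √2 |τ| ‖Y e_m‖₂`. -/
theorem galerkin_residual_norm
    (n m : ℕ)
    (A : Matrix (Fin n) (Fin n) ℝ)
    (V : Matrix (Fin n) (Fin (m + 1)) ℝ)
    (v : Fin n → ℝ) (τ : ℝ)
    (T : Matrix (Fin (m + 1)) (Fin (m + 1)) ℝ)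
    (hT : T = Vᵀ * A * V)
    (hVorth : Vᵀ * V = 1)
    (hvunit : v ⬝ᵥ v = 1)
    (hvV : Vᵀ *ᵥ v = 0)
    (hArnoldi : A * V = V * T + τ • Matrix.vecMulVec v (Pi.single (Fin.last m) 1))
    (β₀ : ℝ) (hβ₀ : 0 ≤ β₀)
    (Y : Matrix (Fin (m + 1)) (Fin (m + 1)) ℝ)
    (hYsymm : Yᵀ = Y)
    (hY : T * Y + Y * Tᵀ = (β₀ ^ 2) • Matrix.single 0 0 (1 : ℝ)) :
    spectralNorm'
        (A * (V * Y * Vᵀ) + (V * Y * Vᵀ) * Aᵀ -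
          (β₀ ^ 2) • Matrix.vecMulVec (V *ᵥ Pi.single 0 1) (V *ᵥ Pi.single 0 1)) =
      |τ| * euclNorm' (fun i => Y i (Fin.last m)) ∧
    frobeniusNorm'
        (A * (V * Y * Vᵀ) + (V * Y * Vᵀ) * Aᵀ -
          (β₀ ^ 2) • Matrix.vecMulVec (V *ᵥ Pi.single 0 1) (V *ᵥ Pi.single 0 1)) =
      Real.sqrt 2 * |τ| * euclNorm' (fun i => Y i (Fin.last m)) :=
  galerkin_residual_norm_general n m A V v τ T hVorth hvunit hvV hArnoldi β₀ Y hYsymm hY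
end
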